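/- In a k-connected chordal graph G with at least k+2 vertices, every edge incident to a simplicial vertex is contractible. -/

import Mathlib

open SimpleGraph

/-- `S` is a vertex separator of `G`: deleting `S` leaves a disconnected graph
(two vertices with no path between them). -/
def IsSeparator {V : Type*} (G : SimpleGraph V) (S : Set V) : Prop :=
  ¬ (G.induce (Sᶜ : Set V)).Preconnected

/-- `S` is a minimal vertex separator of `G`. -/
def MinimalSeparator {V : Type*} (G : SimpleGraph V) (S : Set V) : Prop :=
  IsSeparator G S ∧ ∀ S' ⊂ S, ¬ IsSeparator G S'

/-- `G` is `k`-connected: more than `k` vertices and every separator has size at least `k`. -/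
def KConnected {V : Type*} [Fintype V] (k : ℕ) (G : SimpleGraph V) : Prop :=
  k < Fintype.card V ∧ ∀ S : Set V, IsSeparator G S → k ≤ S.ncard

/-- Vertex connectivity: least size of a set whose removal disconnects the graph
or leaves at most one vertex. -/
noncomputable def vConn {V : Type*} [Fintype V] (G : SimpleGraph V) : ℕ :=
  sInf {n | ∃ S : Set V, S.ncard = n ∧ (IsSeparator G S ∨ (Sᶜ : Set V).ncard ≤ 1)}

/-- Contraction of the edge `{u,v}`: the vertex `v` is deleted and `u` plays the
role of the merged vertex `z`, adjacent to all former neighbors of `u` or `v`. -/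
def contract {V : Type*} (G : SimpleGraph V) (u v : V) :
    SimpleGraph {x : V // x ≠ v} where
  Adj a b := a ≠ b ∧ (G.Adj a b ∨ (a.1 = u ∧ G.Adj v b) ∨ (b.1 = u ∧ G.Adj v a))
  symm := by
    refine ⟨?_⟩
    rintro a b ⟨h1, h2 | ⟨h3, h4⟩ | ⟨h3, h4⟩⟩
    · exact ⟨h1.symm, Or.inl h2.symm⟩
    · exact ⟨h1.symm, Or.inr (Or.inr ⟨h3, h4⟩)⟩
    · exact ⟨h1.symm, Or.inr (Or.inl ⟨h3, h4⟩)⟩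
  loopless := ⟨by rintro a ⟨h, -⟩; exact h rfl⟩

/-- A tree decomposition of `G` with tree `T` and bags `l`. -/
structure TreeDecomp {V ι : Type*} (G : SimpleGraph V) (T : SimpleGraph ι)
    (l : ι → Set V) : Prop where
  conn : T.Connected
  acyclic : T.IsAcyclic
  coversV : ∀ v : V, ∃ x : ι, v ∈ l x
  coversE : ∀ ⦃u v : V⦄, G.Adj u v → ∃ x : ι, u ∈ l x ∧ v ∈ l x
  subtree : ∀ v : V, (T.induce {x : ι | v ∈ l x}).Connected

/-- A clique tree of `G`: a tree decomposition whose bags are exactly the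
maximal cliques of `G`. -/
def IsCliqueTree {V ι : Type*} (G : SimpleGraph V) (T : SimpleGraph ι)
    (l : ι → Set V) : Prop :=
  TreeDecomp G T l ∧ (∀ x : ι, Maximal G.IsClique (l x)) ∧
    ∀ C : Set V, Maximal G.IsClique C → ∃ x : ι, l x = C

/-- `G` is chordal: every cycle of length at least 4 has a chord. -/
def IsChordal {V : Type*} (G : SimpleGraph V) : Prop :=
  ∀ (v : V) (w : G.Walk v v), w.IsCycle → 4 ≤ w.length →
    ∃ a b : V, G.Adj a b ∧ a ∈ w.support ∧ b ∈ w.support ∧ s(a, b) ∉ w.edges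

/-- A split partition of `G`: `I` is a stable set, `K` a clique, partitioning the vertices. -/
def IsSplitPartition {V : Type*} (G : SimpleGraph V) (I K : Set V) : Prop :=
  I ∪ K = Set.univ ∧ Disjoint I K ∧ (∀ a ∈ I, ∀ b ∈ I, ¬ G.Adj a b) ∧ G.IsClique K


/-! Deleting a simplicial vertex `v` from a connected graph keeps it connected: a path through `v`
can shortcut the visit, since the two neighbours of `v` on it are adjacent. If `S` separated the
contraction of `uv`, its preimage `S` in `G` is smaller than `k`, so `G - S` is connected, hence so
is `G - S - v`; and the latter is a spanning subgraph of the contraction minus `S`. -/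

namespace SimpleGraph

variable {V : Type*} {G : SimpleGraph V} {v : V}

/-- The second disjunct lets the induction pass through a visit to `v`: a walk leaving `v` may
equally start at any neighbour of `v`, as these are pairwise adjacent. -/
theorem Walk.reachable_induce_compl_singleton (hv : G.IsClique (G.neighborSet v)) {a b : V}
    (hb : b ≠ v) (w : G.Walk a b) (x : V) (hx : x ≠ v) (hxa : x = a ∨ a = v ∧ G.Adj v x) :
    (G.induce {v}ᶜ).Reachable ⟨x, hx⟩ ⟨b, hb⟩ := by
  induction w generalizing x with
  | nil =>
    rcases hxa with rfl | ⟨hbv, -⟩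
    · rfl
    · exact absurd hbv hb
  | @cons a c b hac p ih =>
    by_cases hc : c = v
    · obtain rfl : x = a := hxa.resolve_right fun ⟨hav, _⟩ => hac.ne (hav.trans hc.symm)
      exact ih hb x hx (Or.inr ⟨hc, hc ▸ hac.symm⟩)
    · have hxc : (G.induce {v}ᶜ).Reachable ⟨x, hx⟩ ⟨c, hc⟩ := by
        rcases hxa with rfl | ⟨hav, hvx⟩
        · exact Adj.reachable (show (G.induce {v}ᶜ).Adj ⟨x, hx⟩ ⟨c, hc⟩ from hac)
        · by_cases hxc : x = c
          · subst hxc; rfl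
          · exact Adj.reachable
              (show (G.induce {v}ᶜ).Adj ⟨x, hx⟩ ⟨c, hc⟩ from hv hvx (hav ▸ hac) hxc)
      exact hxc.trans (ih hb c hc (Or.inl rfl))

theorem Preconnected.induce_compl_singleton (hG : G.Preconnected)
    (hv : G.IsClique (G.neighborSet v)) : (G.induce {v}ᶜ).Preconnected :=
  fun ⟨x, hx⟩ ⟨y, hy⟩ => (hG x y).elim fun w => Walk.reachable_induce_compl_singleton hv hy w x hx
    (Or.inl rfl)

theorem IsClique.neighborSet_induce {s : Set V} (hv : G.IsClique (G.neighborSet v)) (hvs : v ∈ s) :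
    (G.induce s).IsClique ((G.induce s).neighborSet ⟨v, hvs⟩) :=
  fun _ hx _ hy hxy => hv hx hy (Subtype.coe_injective.ne hxy)

end SimpleGraph

section Contract

variable {V : Type*} {G : SimpleGraph V} {u v : V}

theorem contract_adj_of_adj {a b : {x // x ≠ v}} (hab : G.Adj a b) : (contract G u v).Adj a b :=
  ⟨fun h => hab.ne congr($h.1), Or.inl hab⟩

theorem preconnected_induce_contract {S : Set {x // x ≠ v}} (hv : G.IsClique (G.neighborSet v))
    (hS : (G.induce (Subtype.val '' S)ᶜ).Preconnected) :
    ((contract G u v).induce Sᶜ).Preconnected := by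
  have hvS : v ∉ Subtype.val '' S := fun ⟨x, _, hxv⟩ => x.2 hxv
  let f : (G.induce (Subtype.val '' S)ᶜ).induce {⟨v, hvS⟩}ᶜ →g (contract G u v).induce Sᶜ :=
    { toFun x := ⟨⟨x.1.1, fun h => x.2 (Subtype.ext h)⟩, fun hS => x.1.2 ⟨_, hS, rfl⟩⟩
      map_rel' hxy := contract_adj_of_adj hxy }
  refine (hS.induce_compl_singleton (hv.neighborSet_induce hvS)).map f ?_
  rintro ⟨⟨y, hyv⟩, hyS⟩
  exact ⟨⟨⟨y, by rintro ⟨x, hx, rfl⟩; exact hyS hx⟩, fun h => hyv congr($h.1)⟩, rfl⟩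

theorem IsSeparator.image_val_of_contract {S : Set {x // x ≠ v}}
    (hv : G.IsClique (G.neighborSet v)) (hS : IsSeparator (contract G u v) S) :
    IsSeparator G (Subtype.val '' S) :=
  fun h => hS (preconnected_induce_contract hv h)

end Contract

theorem stmt_8_general {V : Type*} [Fintype V] [DecidableEq V] (G : SimpleGraph V) (k : ℕ)
    (hcard : k + 2 ≤ Fintype.card V) (hconn : KConnected k G)
    (u v : V) (hsimp : G.IsClique (G.neighborSet v)) :
    KConnected k (contract G u v) := by
  refine ⟨?_, fun S hS => ?_⟩
  · have hcard_contract : Fintype.card {x // x ≠ v} = Fintype.card V - 1 := by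
      simp [Fintype.card_subtype_compl]
    omega
  · rw [← Set.ncard_image_of_injective S Subtype.val_injective]
    exact hconn.2 _ (hS.image_val_of_contract hsimp)

/-- In a `k`-connected chordal graph with at least `k+2` vertices,
every edge incident to a simplicial vertex is contractible. -/
theorem stmt_8 {V : Type*} [Fintype V] [DecidableEq V] (G : SimpleGraph V) (k : ℕ)
    (hcard : k + 2 ≤ Fintype.card V) (hconn : KConnected k G) (hch : IsChordal G)
    (u v : V) (hsimp : G.IsClique (G.neighborSet v)) (he : G.Adj u v) :
    KConnected k (contract G u v) :=
  stmt_8_general G k hcard hconn u v hsimp
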